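/- Let K be a self-similar compact set of module μ and ratio ρ, with T_u := K^(u) \ K^(u+1). Then for every ordinal α with 0 ≤ α < ω^ω and u ≥ 1, T_u[α] = K[ω^u·(α+1)], and T_0[α] = K[α] if α < ω, while T_0[α] = K[α+1] if α ≥ ω. -/

import Mathlib

open Ordinal Filter Topology Set

/-- The `n`-th derived set of `A ⊆ ℝ`. -/
noncomputable def iterDeriv (A : Set ℝ) (n : ℕ) : Set ℝ := (derivedSet (X := ℝ))^[n] A

/-- The ordinal `ω ^ ω`. -/
noncomputable def wOmega : Ordinal.{0} := Ordinal.omega0 ^ Ordinal.omega0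

/-- An enumeration of `K ⊆ ℝ` witnessing that `K`, with the reverse of the usual order,
is well-ordered with order type `ω ^ ω + 1`: its elements are exactly `e α` for
`α ≤ ω ^ ω`, and the enumeration is strictly order-reversing. `e α` is the element
written `K[α]`. -/
structure OrdEnum (K : Set ℝ) where
  e : Ordinal.{0} → ℝ
  mem : ∀ α ≤ wOmega, e α ∈ K
  surj : ∀ x ∈ K, ∃ α ≤ wOmega, e α = x
  anti : ∀ ⦃α β : Ordinal.{0}⦄, α ≤ wOmega → β ≤ wOmega → (α < β ↔ e β < e α)

/-- An enumeration of a set `S ⊆ ℝ` of reverse-order type `ω ^ ω` (indices `α < ω ^ ω`),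
strictly order-reversing; `e α` is the element written `S[α]`. -/
structure SubEnum (S : Set ℝ) where
  e : Ordinal.{0} → ℝ
  mem : ∀ α < wOmega, e α ∈ S
  surj : ∀ x ∈ S, ∃ α < wOmega, e α = x
  anti : ∀ ⦃α β : Ordinal.{0}⦄, α < wOmega → β < wOmega → (α < β ↔ e β < e α)

/-- A self-similar compact set of ratio `ρ > 1` and module `μ ≥ 1`:
a compact `K ⊆ [0, ∞)`, well-ordered by the reverse usual order with order
type `ω ^ ω + 1`, satisfying `ρ • K^(μ) = K`. -/
def SelfSimilar (K : Set ℝ) (ρ : ℝ) (μ : ℕ) : Prop :=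
  IsCompact K ∧ K ⊆ Set.Ici 0 ∧ 1 < ρ ∧ 1 ≤ μ ∧
    (fun x => ρ * x) '' iterDeriv K μ = K ∧ Nonempty (OrdEnum K)

/-!
An enumeration `E` of a closed set `K` by `α ≤ ω ^ ω` puts `E.e α` in the derived set `K'`
exactly when `α` is a limit ordinal: at a limit, `E.e α` is the infimum of the earlier elements
(closedness of `K` makes the infimum an element of `K`), while at `0` or a successor it is
isolated between its neighbours. The limit ordinals `≤ ω ^ ω` are the `ω * (1 + α)`, so
`K'` is again enumerated by `α ≤ ω ^ ω`, and iterating, `K^(u)` is enumerated by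
`E.e (ω ^ u * (1 + α))` for `u ≥ 1`. Hence `T_u = K^(u) \ K^(u+1)` consists of the images of the
non-limit ordinals under the enumeration of `K^(u)`, and the `α`-th non-limit ordinal `β`
satisfies `1 + β = α + 1`. Finally, an order-reversing enumeration by the ordinals `< ω ^ ω` is
unique, so every enumeration of `T_u` is this one.
-/

open Ordinal Order Filter Topology Set

lemma iterDeriv_zero (K : Set ℝ) : iterDeriv K 0 = K := rfl

lemma iterDeriv_succ (K : Set ℝ) (n : ℕ) :
    iterDeriv K (n + 1) = derivedSet (iterDeriv K n) :=
  Function.iterate_succ_apply' _ _ _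

lemma isClosed_iterDeriv_succ (K : Set ℝ) (n : ℕ) : IsClosed (iterDeriv K (n + 1)) :=
  iterDeriv_succ K n ▸ isClosed_derivedSet _

lemma isSuccLimit_wOmega : IsSuccLimit wOmega := isSuccLimit_opow one_lt_omega0 isSuccLimit_omega0

lemma add_one_lt_wOmega {α : Ordinal} (hα : α < wOmega) : α + 1 < wOmega :=
  isSuccLimit_wOmega.succ_lt hα

lemma omega0_mul_wOmega : ω * wOmega = wOmega := by
  rw [wOmega, ← opow_one_add, one_add_omega0]

lemma omega0_mul_one_add_le_wOmega {α : Ordinal} (hα : α ≤ wOmega) : ω * (1 + α) ≤ wOmega :=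
  calc ω * (1 + α) ≤ ω * (1 + wOmega) := by gcongr
    _ = wOmega := by
      rw [one_add_of_omega0_le (omega0_le_of_isSuccLimit isSuccLimit_wOmega), omega0_mul_wOmega]

lemma isSuccLimit_omega0_mul_one_add (α : Ordinal) : IsSuccLimit (ω * (1 + α)) :=
  isSuccLimit_mul_left isSuccLimit_omega0 (zero_lt_one.trans_le le_self_add)

namespace OrdEnum

variable {K : Set ℝ} (E : OrdEnum K)

lemma le_iff {α β : Ordinal} (hα : α ≤ wOmega) (hβ : β ≤ wOmega) : α ≤ β ↔ E.e β ≤ E.e α := by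
  rw [← not_lt, ← not_lt, E.anti hβ hα]

lemma le_e_zero {y : ℝ} (hy : y ∈ K) : y ≤ E.e 0 := by
  obtain ⟨γ, hγ, rfl⟩ := E.surj y hy
  exact (E.le_iff zero_le hγ).1 zero_le

lemma notMem_Ioo_succ {γ : Ordinal} (hγ : γ < wOmega) {y : ℝ} (hy : y ∈ K) :
    y ∉ Ioo (E.e (γ + 1)) (E.e γ) := by
  rintro ⟨hlt, hgt⟩
  obtain ⟨δ, hδ, rfl⟩ := E.surj y hy
  have hδγ : δ ≤ γ := lt_add_one_iff.1 <| (E.anti hδ (add_one_lt_wOmega hγ).le).2 hlt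
  exact hδγ.not_gt ((E.anti hγ.le hδ).2 hgt)

lemma isGLB_image_Iio (hK : IsClosed K) {α : Ordinal} (hα : α ≤ wOmega)
    (hl : IsSuccLimit α) : IsGLB (E.e '' Iio α) (E.e α) := by
  set S := E.e '' Iio α
  have hSK : S ⊆ K := image_subset_iff.2 fun β hβ => E.mem β ((mem_Iio.1 hβ).le.trans hα)
  have hlb : E.e α ∈ lowerBounds S := by
    rintro _ ⟨β, hβ, rfl⟩
    exact ((E.anti ((mem_Iio.1 hβ).le.trans hα) hα).1 hβ).le
  have hne : S.Nonempty := ⟨_, 0, hl.bot_lt, rfl⟩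
  obtain ⟨δ, hδ, hδS⟩ :=
    E.surj _ (hK.closure_subset_iff.2 hSK (csInf_mem_closure hne ⟨_, hlb⟩))
  have hδα : δ ≤ α := (E.le_iff hδ hα).2 (hδS ▸ le_csInf hne hlb)
  have hαδ : ¬ δ < α := fun h => by
    have hsucc : δ + 1 < α := hl.succ_lt h
    have : E.e δ ≤ E.e (δ + 1) := hδS ▸ csInf_le ⟨_, hlb⟩ ⟨δ + 1, hsucc, rfl⟩
    exact this.not_gt ((E.anti hδ (hsucc.le.trans hα)).1 (lt_add_one δ))
  rw [← le_antisymm hδα (not_lt.1 hαδ), hδS]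
  exact isGLB_csInf hne ⟨_, hlb⟩

lemma e_mem_derivedSet_of_isSuccLimit (hK : IsClosed K) {α : Ordinal} (hα : α ≤ wOmega)
    (hl : IsSuccLimit α) : E.e α ∈ derivedSet K := by
  rw [mem_derivedSet, accPt_principal_iff_nhdsWithin]
  refine ((E.isGLB_image_Iio hK hα hl).nhdsWithin_neBot ⟨_, 0, hl.bot_lt, rfl⟩).mono
    (nhdsWithin_mono _ ?_)
  rintro _ ⟨β, hβ, rfl⟩
  exact ⟨E.mem β (hβ.le.trans hα), ((E.anti (hβ.le.trans hα) hα).1 hβ).ne'⟩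

lemma e_notMem_derivedSet_of_not_isSuccLimit {α : Ordinal} (hα : α ≤ wOmega)
    (hl : ¬ IsSuccLimit α) : E.e α ∉ derivedSet K := by
  have hαω : α < wOmega := hα.lt_of_ne (by rintro rfl; exact hl isSuccLimit_wOmega)
  rw [mem_derivedSet, accPt_iff_frequently_nhdsNE, not_frequently, ← nhdsLT_sup_nhdsGT,
    eventually_sup]
  constructor
  · have hsucc : E.e (α + 1) < E.e α :=
      (E.anti hα (add_one_lt_wOmega hαω).le).1 (lt_add_one α)
    filter_upwards [Ioo_mem_nhdsLT hsucc] with y hy hyK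
    exact E.notMem_Ioo_succ hαω hyK hy
  · rcases zero_or_succ_or_isSuccLimit α with rfl | ⟨β, rfl⟩ | h
    · filter_upwards [self_mem_nhdsWithin] with y hy hyK
      exact (E.le_e_zero hyK).not_gt hy
    · rw [succ_eq_add_one] at hα hαω ⊢
      have hpred : E.e (β + 1) < E.e β := (E.anti (le_self_add.trans hα) hα).1 (lt_add_one β)
      filter_upwards [Ioo_mem_nhdsGT hpred] with y hy hyK
      exact E.notMem_Ioo_succ ((lt_add_one β).trans hαω) hyK hy
    · exact absurd h hl

lemma e_mem_derivedSet_iff (hK : IsClosed K) {α : Ordinal} (hα : α ≤ wOmega) :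
    E.e α ∈ derivedSet K ↔ IsSuccLimit α :=
  ⟨fun h => by_contra fun hl => E.e_notMem_derivedSet_of_not_isSuccLimit hα hl h,
    E.e_mem_derivedSet_of_isSuccLimit hK hα⟩

/-- The limit ordinals `≤ ω ^ ω` are the `ω * (1 + α)` with `α ≤ ω ^ ω`. -/
@[simps]
def derived (hK : IsClosed K) : OrdEnum (derivedSet K) where
  e α := E.e (ω * (1 + α))
  mem α hα := (E.e_mem_derivedSet_iff hK (omega0_mul_one_add_le_wOmega hα)).2
    (isSuccLimit_omega0_mul_one_add α)
  surj x hx := by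
    obtain ⟨γ, hγ, rfl⟩ := E.surj x ((isClosed_iff_derivedSet_subset K).1 hK hx)
    have hl := (E.e_mem_derivedSet_iff hK hγ).1 hx
    obtain ⟨β, rfl⟩ := isSuccPrelimit_iff_omega0_dvd.1 hl.isSuccPrelimit
    have hβ : β ≤ wOmega := by
      rwa [← omega0_mul_wOmega, mul_le_mul_iff_of_pos_left omega0_pos] at hγ
    refine ⟨β - 1, (sub_le_self β 1).trans hβ, ?_⟩
    rw [Ordinal.add_sub_cancel_of_le (one_le_iff_ne_zero.2 (right_ne_zero_of_mul hl.ne_bot))]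
  anti α β hα hβ := by
    rw [← E.anti (omega0_mul_one_add_le_wOmega hα) (omega0_mul_one_add_le_wOmega hβ),
      mul_lt_mul_iff_of_pos_left omega0_pos, add_lt_add_iff_left]

end OrdEnum

lemma exists_ordEnum_iterDeriv_succ {K : Set ℝ} (hK : IsClosed K) (E : OrdEnum K) (n : ℕ) :
    ∃ E' : OrdEnum (iterDeriv K (n + 1)),
      ∀ α, E'.e α = E.e (ω ^ ((n + 1 : ℕ) : Ordinal) * (1 + α)) := by
  induction n with
  | zero => exact ⟨E.derived hK, fun α => by simp⟩
  | succ n ih =>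
    obtain ⟨E', hE'⟩ := ih
    rw [iterDeriv_succ]
    refine ⟨E'.derived (isClosed_iterDeriv_succ K n), fun α => ?_⟩
    have hω : ω ≤ ω * (1 + α) := omega0_le_of_isSuccLimit (isSuccLimit_omega0_mul_one_add α)
    rw [OrdEnum.derived_e, hE', one_add_of_omega0_le hω, ← mul_assoc, ← opow_succ]
    push_cast
    rfl

/-- The `α`-th ordinal that is not a limit ordinal, counting `0` as non-limit. -/
noncomputable def nthNonLimit (α : Ordinal) : Ordinal := if α < ω then α else α + 1

lemma nthNonLimit_of_lt {α : Ordinal} (hα : α < ω) : nthNonLimit α = α := if_pos hα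

lemma nthNonLimit_of_le {α : Ordinal} (hα : ω ≤ α) : nthNonLimit α = α + 1 := if_neg hα.not_gt

lemma nthNonLimit_lt_wOmega {α : Ordinal} (hα : α < wOmega) : nthNonLimit α < wOmega := by
  unfold nthNonLimit
  split_ifs
  exacts [hα, add_one_lt_wOmega hα]

lemma strictMono_nthNonLimit : StrictMono nthNonLimit := by
  intro α β hαβ
  unfold nthNonLimit
  split_ifs with hα hβ hβ
  · exact hαβ
  · exact hαβ.trans (lt_add_one β)
  · exact absurd (hαβ.trans hβ) hα
  · simpa only [← succ_eq_add_one] using succ_lt_succ hαβ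

lemma not_isSuccLimit_nthNonLimit (α : Ordinal) : ¬ IsSuccLimit (nthNonLimit α) := by
  unfold nthNonLimit
  split_ifs with hα
  · exact fun hl => (omega0_le_of_isSuccLimit hl).not_gt hα
  · rw [← succ_eq_add_one]
    exact not_isSuccLimit_succ α

lemma exists_nthNonLimit_eq {β : Ordinal} (hβ : ¬ IsSuccLimit β) :
    ∃ α ≤ β, nthNonLimit α = β := by
  by_cases hβω : β < ω
  · exact ⟨β, le_rfl, nthNonLimit_of_lt hβω⟩
  rcases zero_or_succ_or_isSuccLimit β with rfl | ⟨α, rfl⟩ | hl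
  · exact absurd omega0_pos hβω
  · have hαω : ω ≤ α := not_lt.1 fun h => hβω (isSuccLimit_omega0.succ_lt h)
    exact ⟨α, le_succ α, by rw [nthNonLimit_of_le hαω, succ_eq_add_one]⟩
  · exact absurd hl hβ

lemma one_add_nthNonLimit (α : Ordinal) : 1 + nthNonLimit α = α + 1 := by
  unfold nthNonLimit
  split_ifs with hα
  · obtain ⟨n, rfl⟩ := lt_omega0.1 hα
    exact_mod_cast add_comm 1 n
  · rw [← add_assoc, one_add_of_omega0_le (not_lt.1 hα)]

@[simps]
noncomputable def OrdEnum.isolated {K : Set ℝ} (E : OrdEnum K) (hK : IsClosed K) :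
    SubEnum (K \ derivedSet K) where
  e α := E.e (nthNonLimit α)
  mem α hα := ⟨E.mem _ (nthNonLimit_lt_wOmega hα).le,
    E.e_notMem_derivedSet_of_not_isSuccLimit (nthNonLimit_lt_wOmega hα).le
      (not_isSuccLimit_nthNonLimit α)⟩
  surj x hx := by
    obtain ⟨β, hβ, rfl⟩ := E.surj x hx.1
    have hl : ¬ IsSuccLimit β := fun hl => hx.2 (E.e_mem_derivedSet_of_isSuccLimit hK hβ hl)
    obtain ⟨α, hαβ, rfl⟩ := exists_nthNonLimit_eq hl
    exact ⟨α, hαβ.trans_lt (hβ.lt_of_ne fun h => hl (h ▸ isSuccLimit_wOmega)), rfl⟩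
  anti α β hα hβ := by
    rw [← E.anti (nthNonLimit_lt_wOmega hα).le (nthNonLimit_lt_wOmega hβ).le,
      strictMono_nthNonLimit.lt_iff_lt]

namespace SubEnum

variable {S : Set ℝ}

lemma strictMono_toDual (F : SubEnum S) :
    StrictMono fun α : Iio wOmega => OrderDual.toDual (F.e α) :=
  fun α β h => (F.anti α.2 β.2).1 h

lemma range_toDual (F : SubEnum S) :
    range (fun α : Iio wOmega => OrderDual.toDual (F.e α)) = OrderDual.ofDual ⁻¹' S := by
  ext x
  constructor
  · rintro ⟨α, rfl⟩
    exact F.mem α α.2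
  · intro hx
    obtain ⟨α, hα, h⟩ := F.surj _ hx
    exact ⟨⟨α, hα⟩, h⟩

lemma e_eq (F G : SubEnum S) {α : Ordinal} (hα : α < wOmega) : F.e α = G.e α :=
  congrFun ((F.strictMono_toDual.range_inj G.strictMono_toDual).1
    (F.range_toDual.trans G.range_toDual.symm)) ⟨α, hα⟩

end SubEnum

theorem section_index_formula (K : Set ℝ) (ρ : ℝ) (μ : ℕ)
    (h : SelfSimilar K ρ μ) (T : ℕ → Set ℝ)
    (hT : ∀ u, T u = iterDeriv K u \ iterDeriv K (u + 1)) (E : OrdEnum K) :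
    (∀ u : ℕ, 1 ≤ u → ∀ Eu : SubEnum (T u), ∀ α < wOmega,
      Eu.e α = E.e (Ordinal.omega0 ^ (u : Ordinal) * (α + 1))) ∧
    (∀ E0 : SubEnum (T 0), ∀ α < wOmega,
      (α < Ordinal.omega0 → E0.e α = E.e α) ∧
      (Ordinal.omega0 ≤ α → E0.e α = E.e (α + 1))) := by
  have hK : IsClosed K := h.1.isClosed
  have hTu : ∀ u, T u = iterDeriv K u \ derivedSet (iterDeriv K u) := fun u => by
    rw [hT, iterDeriv_succ]
  refine ⟨fun u hu => ?_, ?_⟩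
  · obtain ⟨n, rfl⟩ := Nat.exists_eq_add_of_le' hu
    obtain ⟨E', hE'⟩ := exists_ordEnum_iterDeriv_succ hK E n
    rw [hTu]
    intro Eu α hα
    rw [Eu.e_eq (E'.isolated (isClosed_iterDeriv_succ K n)) hα, OrdEnum.isolated_e, hE',
      one_add_nthNonLimit]
  · rw [hTu, iterDeriv_zero]
    intro E0 α hα
    rw [E0.e_eq (E.isolated hK) hα, OrdEnum.isolated_e]
    exact ⟨fun hαω => congrArg E.e (nthNonLimit_of_lt hαω),
      fun hαω => congrArg E.e (nthNonLimit_of_le hαω)⟩
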